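/- Let L ∈ ℝ^{m×n}, f ∈ ℝ^m, P = I − L L⁺, and let a₁, a₂ ∈ ℝ^m with P a₁ ≠ 0 and P a₂ ≠ 0. If |fᵀ P a₁|/‖P a₁‖ ≥ |fᵀ P a₂|/‖P a₂‖, then ‖(I − (L,a₁)(L,a₁)⁺) f‖ ≤ ‖(I − (L,a₂)(L,a₂)⁺) f‖. That is, the column a maximizing |fᵀ P a|/‖P a‖ minimizes the residual norm of the augmented least-squares problem. -/
import Mathlib
open Matrix

def IsMoorePenrose {m n : ℕ} (L : Matrix (Fin m) (Fin n) ℝ)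
    (Lp : Matrix (Fin n) (Fin m) ℝ) : Prop :=
  L * Lp * L = L ∧ Lp * L * Lp = Lp ∧ (L * Lp)ᵀ = L * Lp ∧ (Lp * L)ᵀ = Lp * L

def appendCol {m n : ℕ} (L : Matrix (Fin m) (Fin n) ℝ) (a : Fin m → ℝ) :
    Matrix (Fin m) (Fin (n + 1)) ℝ :=
  Matrix.of fun i j => Fin.lastCases (a i) (fun j' => L i j') j

lemma mul_appendCol' {m n k : ℕ} (S : Matrix (Fin k) (Fin m) ℝ)
    (L : Matrix (Fin m) (Fin n) ℝ) (a : Fin m → ℝ) :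
    S * appendCol L a = appendCol (S * L) (S *ᵥ a) := by
  ext i j
  induction j using Fin.lastCases with
  | last => simp [appendCol, mul_apply, mulVec, dotProduct]
  | cast j' => simp [appendCol, mul_apply]

lemma appendCol_mul' {m n k : ℕ} (L : Matrix (Fin m) (Fin n) ℝ) (a : Fin m → ℝ)
    (T : Matrix (Fin (n + 1)) (Fin k) ℝ) :
    appendCol L a * T =
      L * T.submatrix Fin.castSucc id + vecMulVec a (T (Fin.last n)) := by
  ext i j
  simp [mul_apply, appendCol, vecMulVec_apply, Fin.sum_univ_castSucc]

section helpers
variable {k l p : ℕ}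

lemma mul_vecMulVec' (A : Matrix (Fin k) (Fin l) ℝ) (u : Fin l → ℝ) (v : Fin p → ℝ) :
    A * vecMulVec u v = vecMulVec (A *ᵥ u) v := by
  ext i j
  simp [mul_apply, vecMulVec_apply, mulVec, dotProduct, Finset.sum_mul, mul_assoc]

lemma vecMulVec_mul' (u : Fin k → ℝ) (v : Fin l → ℝ) (A : Matrix (Fin l) (Fin p) ℝ) :
    vecMulVec u v * A = vecMulVec u (v ᵥ* A) := by
  ext i j
  simp [mul_apply, vecMulVec_apply, vecMul, dotProduct, Finset.mul_sum, mul_assoc]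

lemma vecMulVec_mulVec' (u : Fin k → ℝ) (v : Fin l → ℝ) (w : Fin l → ℝ) :
    vecMulVec u v *ᵥ w = (v ⬝ᵥ w) • u := by
  ext i
  simp only [mulVec, dotProduct, vecMulVec_apply, Pi.smul_apply, smul_eq_mul,
    Finset.sum_mul]
  exact Finset.sum_congr rfl fun x _ => by ring

lemma transpose_vecMulVec' (u v : Fin k → ℝ) :
    (vecMulVec u v)ᵀ = vecMulVec v u := by
  ext i j; simp [vecMulVec_apply, mul_comm]

lemma vecMulVec_sub_left' (u w : Fin k → ℝ) (v : Fin l → ℝ) :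
    vecMulVec (u - w) v = vecMulVec u v - vecMulVec w v := by
  ext i j; simp [vecMulVec_apply, sub_mul]

end helpers

/-- Key: the projector `M M⁺` for `M = (L, a)` equals `L L⁺ + b bᵀ/(bᵀb)` with `b = P a`. -/
lemma key {m n : ℕ} (L : Matrix (Fin m) (Fin n) ℝ) (Lp : Matrix (Fin n) (Fin m) ℝ)
    (hLp : IsMoorePenrose L Lp) (a : Fin m → ℝ)
    (ha : (1 - L * Lp) *ᵥ a ≠ 0)
    (Mp : Matrix (Fin (n + 1)) (Fin m) ℝ)
    (hM : IsMoorePenrose (appendCol L a) Mp) :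
    appendCol L a * Mp =
      L * Lp + (((1 - L * Lp) *ᵥ a) ⬝ᵥ ((1 - L * Lp) *ᵥ a))⁻¹ •
        vecMulVec ((1 - L * Lp) *ᵥ a) ((1 - L * Lp) *ᵥ a) := by
  obtain ⟨h1, h2, h3, h4⟩ := hLp
  set Q := L * Lp with hQdef
  set b := (1 - Q) *ᵥ a with hbdef
  set β := b ⬝ᵥ b with hβdef
  have hβ0 : β ≠ 0 := fun h => ha (dotProduct_self_eq_zero.mp h)
  have hb : b = a - Q *ᵥ a := by rw [hbdef, sub_mulVec, one_mulVec]
  have hQQ : Q * Q = Q := by rw [hQdef, ← Matrix.mul_assoc, h1]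
  have hQb : Q *ᵥ b = 0 := by
    rw [hb, mulVec_sub, mulVec_mulVec, hQQ, sub_self]
  have hbQ : b ᵥ* Q = 0 := by
    have : b ᵥ* Q = Qᵀ *ᵥ b := by rw [← vecMul_transpose, transpose_transpose]
    rw [this, h3, hQb]
  have hbL : b ᵥ* L = 0 := by
    have : b ᵥ* L = Lᵀ *ᵥ b := by rw [← vecMul_transpose, transpose_transpose]
    rw [this, hb, mulVec_sub, mulVec_mulVec]
    have : Lᵀ * Q = Lᵀ := by
      calc Lᵀ * Q = Lᵀ * Qᵀ := by rw [h3]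
      _ = (Q * L)ᵀ := (transpose_mul Q L).symm
      _ = Lᵀ := by rw [hQdef, h1]
    rw [this, sub_self]
  have hba : b ⬝ᵥ a = β := by
    have ha' : a = b + Q *ᵥ a := by rw [hb]; ring
    calc b ⬝ᵥ a = b ⬝ᵥ (b + Q *ᵥ a) := by rw [← ha']
    _ = β + b ⬝ᵥ (Q *ᵥ a) := by rw [dotProduct_add]
    _ = β := by rw [dotProduct_mulVec, hbQ, zero_dotProduct, add_zero]
  set R := Q + β⁻¹ • vecMulVec b b with hRdef
  -- Step A : R * M = M
  have hRL : R * L = L := by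
    rw [hRdef, Matrix.add_mul, Matrix.smul_mul, vecMulVec_mul', hbL, hQdef, h1]
    ext i j; simp [vecMulVec_apply]
  have hRa : R *ᵥ a = a := by
    rw [hRdef, add_mulVec, smul_mulVec, vecMulVec_mulVec', hba, smul_smul,
      inv_mul_cancel₀ hβ0, one_smul, hb]
    ring
  have hRM : R * appendCol L a = appendCol L a := by
    rw [mul_appendCol', hRL, hRa]
  -- Step B : R = M * T for some T
  set T : Matrix (Fin (n + 1)) (Fin m) ℝ :=
    Matrix.of fun j i => Fin.lastCases (β⁻¹ * b i)
      (fun j' => Lp j' i - β⁻¹ * (Lp *ᵥ a) j' * b i) j with hTdef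
  have hTsub : T.submatrix Fin.castSucc id = Lp - β⁻¹ • vecMulVec (Lp *ᵥ a) b := by
    ext j' i
    simp [hTdef, vecMulVec_apply, mul_assoc]
  have hTlast : T (Fin.last n) = β⁻¹ • b := by
    ext i; simp [hTdef]
  have hMT : appendCol L a * T = R := by
    rw [appendCol_mul', hTsub, hTlast]
    have h5 : vecMulVec a (β⁻¹ • b) = β⁻¹ • vecMulVec a b := by
      ext i j; simp [vecMulVec_apply]; ring
    rw [h5, Matrix.mul_sub, Matrix.mul_smul, mul_vecMulVec', mulVec_mulVec, ← hQdef,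
      hRdef, hb, vecMulVec_sub_left', smul_sub]
    abel
  -- Step C : uniqueness
  set E := appendCol L a * Mp with hEdef
  have hEM : E * appendCol L a = appendCol L a := hM.1
  have hER : E * R = R := by
    rw [← hMT, ← Matrix.mul_assoc, hEdef, hM.1]
  have hRsym : Rᵀ = R := by
    rw [hRdef, transpose_add, transpose_smul, transpose_vecMulVec', h3]
  have hEsym : Eᵀ = E := hM.2.2.1
  have hRE : R * E = R := by
    have := congrArg transpose hER
    rwa [transpose_mul, hRsym, hEsym] at this
  have hRE' : R * E = E := by
    rw [hEdef, ← Matrix.mul_assoc, hRM]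
  rw [← hRE', hRE, hRdef]

lemma resid {m n : ℕ} (L : Matrix (Fin m) (Fin n) ℝ) (Lp : Matrix (Fin n) (Fin m) ℝ)
    (hLp : IsMoorePenrose L Lp) (a : Fin m → ℝ)
    (ha : (1 - L * Lp) *ᵥ a ≠ 0)
    (Mp : Matrix (Fin (n + 1)) (Fin m) ℝ)
    (hM : IsMoorePenrose (appendCol L a) Mp) (f : Fin m → ℝ) :
    ((1 - appendCol L a * Mp) *ᵥ f) ⬝ᵥ ((1 - appendCol L a * Mp) *ᵥ f) =
      ((1 - L * Lp) *ᵥ f) ⬝ᵥ ((1 - L * Lp) *ᵥ f) -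
        (f ⬝ᵥ ((1 - L * Lp) *ᵥ a)) ^ 2 *
          ((((1 - L * Lp) *ᵥ a) ⬝ᵥ ((1 - L * Lp) *ᵥ a)))⁻¹ := by
  rw [key L Lp hLp a ha Mp hM]
  obtain ⟨h1, h2, h3, h4⟩ := hLp
  set Q := L * Lp with hQdef
  set b := (1 - Q) *ᵥ a with hbdef
  set β := b ⬝ᵥ b with hβdef
  have hβ0 : β ≠ 0 := fun h => ha (dotProduct_self_eq_zero.mp h)
  have hQQ : Q * Q = Q := by rw [hQdef, ← Matrix.mul_assoc, h1]
  have hQb : Q *ᵥ b = 0 := by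
    rw [hbdef, mulVec_mulVec, Matrix.mul_sub, Matrix.mul_one, hQQ, sub_self, zero_mulVec]
  have hbQ : b ᵥ* Q = 0 := by
    have : b ᵥ* Q = Qᵀ *ᵥ b := by rw [← vecMul_transpose, transpose_transpose]
    rw [this, h3, hQb]
  set g := (1 - Q) *ᵥ f with hgdef
  set c := f ⬝ᵥ b with hcdef
  have hgb : g ⬝ᵥ b = c := by
    rw [hgdef, sub_mulVec, one_mulVec, sub_dotProduct, hcdef]
    have : (Q *ᵥ f) ⬝ᵥ b = 0 := by
      rw [dotProduct_comm, dotProduct_mulVec, hbQ, zero_dotProduct]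
    rw [this, sub_zero]
  have hbg : b ⬝ᵥ g = c := by rw [dotProduct_comm, hgb]
  have hr : (1 - (Q + β⁻¹ • vecMulVec b b)) *ᵥ f = g - (β⁻¹ * c) • b := by
    rw [sub_mulVec, one_mulVec, add_mulVec, smul_mulVec, vecMulVec_mulVec',
      hgdef, sub_mulVec, one_mulVec]
    have : b ⬝ᵥ f = c := by rw [dotProduct_comm, hcdef]
    rw [this, smul_smul]
    abel
  rw [hr]
  simp only [sub_dotProduct, dotProduct_sub, smul_dotProduct, dotProduct_smul,
    smul_eq_mul, hgb, hbg, ← hβdef]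
  field_simp
  ring

/-- if `|fᵀ P a₁|/‖P a₁‖ ≥ |fᵀ P a₂|/‖P a₂‖` then the augmented
least-squares residual with column `a₁` is no larger than that with `a₂`:
`‖(I - (L,a₁)(L,a₁)⁺) f‖ ≤ ‖(I - (L,a₂)(L,a₂)⁺) f‖`. -/
theorem stmt6 {m n : ℕ} (L : Matrix (Fin m) (Fin n) ℝ) (Lp : Matrix (Fin n) (Fin m) ℝ)
    (hLp : IsMoorePenrose L Lp)
    (P : Matrix (Fin m) (Fin m) ℝ) (hP : P = 1 - L * Lp)
    (f a₁ a₂ : Fin m → ℝ)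
    (hPa₁ : P *ᵥ a₁ ≠ 0) (hPa₂ : P *ᵥ a₂ ≠ 0)
    (M₁p M₂p : Matrix (Fin (n + 1)) (Fin m) ℝ)
    (hM₁ : IsMoorePenrose (appendCol L a₁) M₁p)
    (hM₂ : IsMoorePenrose (appendCol L a₂) M₂p)
    (hcmp : |f ⬝ᵥ (P *ᵥ a₂)| / Real.sqrt ((P *ᵥ a₂) ⬝ᵥ (P *ᵥ a₂)) ≤
            |f ⬝ᵥ (P *ᵥ a₁)| / Real.sqrt ((P *ᵥ a₁) ⬝ᵥ (P *ᵥ a₁)))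
    (r₁ r₂ : Fin m → ℝ)
    (hr₁ : r₁ = (1 - appendCol L a₁ * M₁p) *ᵥ f)
    (hr₂ : r₂ = (1 - appendCol L a₂ * M₂p) *ᵥ f) :
    Real.sqrt (r₁ ⬝ᵥ r₁) ≤ Real.sqrt (r₂ ⬝ᵥ r₂) := by
  subst hP hr₁ hr₂
  rw [resid L Lp hLp a₁ hPa₁ M₁p hM₁ f, resid L Lp hLp a₂ hPa₂ M₂p hM₂ f]
  apply Real.sqrt_le_sqrt
  apply sub_le_sub_left
  set b₁ := (1 - L * Lp) *ᵥ a₁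
  set b₂ := (1 - L * Lp) *ᵥ a₂
  have hβ₁nn : 0 ≤ b₁ ⬝ᵥ b₁ := Finset.sum_nonneg fun i _ => mul_self_nonneg _
  have hβ₂nn : 0 ≤ b₂ ⬝ᵥ b₂ := Finset.sum_nonneg fun i _ => mul_self_nonneg _
  have key : ∀ (c β : ℝ), 0 ≤ β → (|c| / Real.sqrt β) * (|c| / Real.sqrt β) = c ^ 2 * β⁻¹ := by
    intro c β hβ
    rcases eq_or_lt_of_le hβ with h | h
    · rw [← h]; simp
    · rw [div_mul_div_comm, abs_mul_abs_self, Real.mul_self_sqrt hβ, ← sq, div_eq_mul_inv]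
  have h2 := mul_self_le_mul_self
    (div_nonneg (abs_nonneg _) (Real.sqrt_nonneg _)) hcmp
  rw [key _ _ hβ₂nn, key _ _ hβ₁nn] at h2
  exact h2
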